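/- Let E and F be Archimedean Riesz spaces with positive elements e ∈ E₊ and f ∈ F₊. If p is a component of e in E and q is a component of f in F, then p ⊗ q is a component of e ⊗ f in the Fremlin tensor product E ⊗̄ F; in particular, (e ⊗ f - p ⊗ q) ∧ (p ⊗ q) = 0. -/
import Mathlib


/-- `p` is a component of `e`. -/
def IsComponent {E : Type*} [Lattice E] [AddCommGroup E] (e p : E) : Prop :=
  0 ≤ p ∧ p ≤ e ∧ p ⊓ (e - p) = 0

private lemma inf_add_eq_zero {G : Type*} [Lattice G] [AddCommGroup G]
    [CovariantClass G G (· + ·) (· ≤ ·)] {a b c : G}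
    (ha : 0 ≤ a) (hb : 0 ≤ b) (hc : 0 ≤ c)
    (hab : a ⊓ b = 0) (hac : a ⊓ c = 0) : a ⊓ (b + c) = 0 := by
  set d := a ⊓ (b + c) with hd
  have hd0 : 0 ≤ d := le_inf ha (add_nonneg hb hc)
  have hda : d ≤ a := inf_le_left
  have hdbc : d ≤ b + c := inf_le_right
  have key : d = (d - a) ⊔ (d - c) := by
    have := sub_inf (c := d) (a := a) (b := c)
    rw [hac, sub_zero] at this
    exact this
  have h1 : d - a ≤ 0 := sub_nonpos.mpr hda
  have h2 : d - c ≤ a ⊓ b := by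
    refine le_inf ?_ ?_
    · exact le_trans (sub_le_sub hda hc) (by simp)
    · exact sub_le_iff_le_add'.mpr (hdbc.trans_eq (add_comm b c))
  have : d ≤ 0 := by
    rw [key]
    exact sup_le h1 (h2.trans_eq hab)
  exact le_antisymm this hd0

/-- in the Fremlin tensor product of Archimedean Riesz spaces (modelled by
a positive bilinear map satisfying the Fremlin lattice identities), the tensor product
`p ⊗ q` of components `p` of `e` and `q` of `f` is a component of `e ⊗ f`; in particular
`(e ⊗ f - p ⊗ q) ⊓ (p ⊗ q) = 0`. -/
theorem tmul_isComponent
    {E F G : Type*}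
    [Lattice E] [AddCommGroup E] [Module ℝ E] [CovariantClass E E (· + ·) (· ≤ ·)]
    [Lattice F] [AddCommGroup F] [Module ℝ F] [CovariantClass F F (· + ·) (· ≤ ·)]
    [Lattice G] [AddCommGroup G] [Module ℝ G] [CovariantClass G G (· + ·) (· ≤ ·)]
    (harchE : ∀ x y : E, (∀ n : ℕ, n • x ≤ y) → x ≤ 0)
    (harchF : ∀ x y : F, (∀ n : ℕ, n • x ≤ y) → x ≤ 0)
    (harchG : ∀ x y : G, (∀ n : ℕ, n • x ≤ y) → x ≤ 0)
    (tmul : E →ₗ[ℝ] F →ₗ[ℝ] G)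
    (hpos : ∀ x y, 0 ≤ x → 0 ≤ y → 0 ≤ tmul x y)
    (hinfl : ∀ (x x' : E) (y : F), 0 ≤ y → tmul (x ⊓ x') y = tmul x y ⊓ tmul x' y)
    (hinfr : ∀ (x : E) (y y' : F), 0 ≤ x → tmul x (y ⊓ y') = tmul x y ⊓ tmul x y')
    (e : E) (f : F) (he : 0 ≤ e) (hf : 0 ≤ f)
    (p : E) (q : F) (hp : IsComponent e p) (hq : IsComponent f q) :
    IsComponent (tmul e f) (tmul p q) ∧
      (tmul e f - tmul p q) ⊓ (tmul p q) = 0 := by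
  obtain ⟨hp0, hpe, hpc⟩ := hp
  obtain ⟨hq0, hqf, hqc⟩ := hq
  have hep : 0 ≤ e - p := sub_nonneg.mpr hpe
  have hfq : 0 ≤ f - q := sub_nonneg.mpr hqf
  have hpq0 : 0 ≤ tmul p q := hpos _ _ hp0 hq0
  -- decomposition
  have hdec : tmul e f - tmul p q = tmul (e - p) f + tmul p (f - q) := by
    simp only [map_sub, LinearMap.sub_apply]
    abel
  have hb : 0 ≤ tmul (e - p) f := hpos _ _ hep hf
  have hc : 0 ≤ tmul p (f - q) := hpos _ _ hp0 hfq
  have hle : tmul p q ≤ tmul e f := by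
    exact sub_nonneg.mp (hdec ▸ add_nonneg hb hc)
  -- disjointness with first summand
  have h1 : tmul p q ⊓ tmul (e - p) f = 0 := by
    have hqf' : tmul p q ≤ tmul p f := by
      have : 0 ≤ tmul p f - tmul p q := by
        have := hpos p (f - q) hp0 hfq
        simpa [map_sub] using this
      exact sub_nonneg.mp this
    refine le_antisymm ?_ (le_inf hpq0 hb)
    calc tmul p q ⊓ tmul (e - p) f ≤ tmul p f ⊓ tmul (e - p) f :=
          inf_le_inf_right _ hqf'
      _ = tmul (p ⊓ (e - p)) f := (hinfl _ _ _ hf).symm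
      _ = 0 := by rw [hpc]; simp
  have h2 : tmul p q ⊓ tmul p (f - q) = 0 := by
    rw [← hinfr _ _ _ hp0, hqc]; simp
  have hmain : tmul p q ⊓ (tmul e f - tmul p q) = 0 := by
    rw [hdec]
    exact inf_add_eq_zero hpq0 hb hc h1 h2
  refine ⟨⟨hpq0, hle, hmain⟩, by rw [inf_comm]; exact hmain⟩
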